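/- arXiv:quant-ph/0508170 — 2 statements merged into one kernel-verified Lean document; each statement's English description precedes it below -/
import Mathlib

section
/- If ξ₁, …, ξ_n is a prefix free family of quantum strings spanning a subspace H, then any two orthogonal vectors |φ⟩, |ψ⟩ in H are mutually prefix free: for every |χ⟩ with ⟨ε|χ⟩ = 0 one has ⟨φχ|ψ⟩ = 0 and ⟨ψχ|φ⟩ = 0. Consequently every orthogonal basis of a prefix free Hilbert space is prefix free. -/
open scoped Classical BigOperators

noncomputable section

/-- Quantum strings: finitely-supported amplitude functions on finite binary strings
(the Fock space ⊕ₙ (ℂ²)^{⊗n}). -/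
abbrev QStr := (List Bool) →₀ ℂ

/-- Inner product ⟨φ|ψ⟩ = Σ conj(φ x) ψ x. -/
noncomputable def inn (φ ψ : QStr) : ℂ :=
  ∑ x ∈ φ.support ∪ ψ.support, (starRingEnd ℂ) (φ x) * ψ x

/-- Concatenation |φχ⟩, extended bilinearly from basis strings. -/
noncomputable def qconcat (φ χ : QStr) : QStr :=
  φ.sum fun x a => χ.sum fun y b => Finsupp.single (x ++ y) (a * b)

/-- |φ⟩ is a (quantum) prefix of |ψ⟩. -/
def QIsPrefix (φ ψ : QStr) : Prop :=
  ∃ χ : QStr, χ [] = 0 ∧ inn (qconcat φ χ) ψ ≠ 0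

/-- Base length: maximal classical length in the support. -/
noncomputable def baseLen (ψ : QStr) : ℕ := ψ.support.sup List.length

/-- Average length. -/
noncomputable def avgLen (ψ : QStr) : ℝ := ∑ x ∈ ψ.support, ‖ψ x‖ ^ 2 * (x.length : ℝ)


lemma inn_left (φ ψ : QStr) :
    inn φ ψ = ∑ x ∈ ψ.support, (starRingEnd ℂ) (φ x) * ψ x := by
  unfold inn
  exact (Finset.sum_subset Finset.subset_union_right
    (fun x _ hx => by simp [Finsupp.notMem_support_iff.mp hx])).symm

lemma inn_right (φ ψ : QStr) :
    inn φ ψ = ∑ x ∈ φ.support, (starRingEnd ℂ) (φ x) * ψ x := by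
  unfold inn
  exact (Finset.sum_subset Finset.subset_union_left
    (fun x _ hx => by simp [Finsupp.notMem_support_iff.mp hx])).symm

lemma inn_add_left (φ φ' ψ : QStr) : inn (φ + φ') ψ = inn φ ψ + inn φ' ψ := by
  simp [inn_left, add_mul, Finset.sum_add_distrib]

lemma inn_smul_left (c : ℂ) (φ ψ : QStr) :
    inn (c • φ) ψ = (starRingEnd ℂ) c * inn φ ψ := by
  simp [inn_left, mul_assoc, Finset.mul_sum]

lemma inn_zero_left (ψ : QStr) : inn 0 ψ = 0 := by simp [inn_left]

lemma inn_add_right (φ ψ ψ' : QStr) : inn φ (ψ + ψ') = inn φ ψ + inn φ ψ' := by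
  simp [inn_right, mul_add, Finset.sum_add_distrib]

lemma inn_smul_right (c : ℂ) (φ ψ : QStr) : inn φ (c • ψ) = c * inn φ ψ := by
  simp [inn_right, Finset.mul_sum]; ring_nf; simp [mul_comm, mul_left_comm]

lemma inn_zero_right (φ : QStr) : inn φ 0 = 0 := by simp [inn_right]

lemma qconcat_add_left (φ φ' χ : QStr) :
    qconcat (φ + φ') χ = qconcat φ χ + qconcat φ' χ := by
  unfold qconcat
  rw [Finsupp.sum_add_index']
  · intro x; simp
  · intro x a a'; simp [add_mul, Finsupp.single_add, Finsupp.sum_add]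

lemma qconcat_smul_left (c : ℂ) (φ χ : QStr) :
    qconcat (c • φ) χ = c • qconcat φ χ := by
  unfold qconcat
  rw [Finsupp.sum_smul_index (fun x => by simp), Finsupp.smul_sum]
  refine Finset.sum_congr rfl fun x _ => ?_
  show _ = c • Finsupp.sum χ _
  rw [Finsupp.smul_sum]
  refine Finset.sum_congr rfl fun y _ => ?_
  show _ = c • Finsupp.single _ _
  rw [Finsupp.smul_single, smul_eq_mul]; ring_nf

lemma qconcat_zero_left (χ : QStr) : qconcat 0 χ = 0 := by
  simp [qconcat]

/-- any two orthogonal vectors in a prefix free Hilbert space are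
mutually prefix free. -/
theorem stmt_3 (n : ℕ) (ξ : Fin n → QStr)
    (hpf : ∀ i j, ∀ χ : QStr, χ [] = 0 → inn (qconcat (ξ i) χ) (ξ j) = 0)
    (φ ψ : QStr)
    (hφmem : φ ∈ Submodule.span ℂ (Set.range ξ))
    (hψmem : ψ ∈ Submodule.span ℂ (Set.range ξ))
    (horth : inn φ ψ = 0) :
    ∀ χ : QStr, χ [] = 0 → inn (qconcat φ χ) ψ = 0 ∧ inn (qconcat ψ χ) φ = 0 := by
  intro χ hχ
  have key : ∀ α ∈ Submodule.span ℂ (Set.range ξ),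
      ∀ β ∈ Submodule.span ℂ (Set.range ξ), inn (qconcat α χ) β = 0 := by
    intro α hα
    induction hα using Submodule.span_induction with
    | mem x hx =>
      obtain ⟨i, rfl⟩ := hx
      intro β hβ
      induction hβ using Submodule.span_induction with
      | mem y hy => obtain ⟨j, rfl⟩ := hy; exact hpf i j χ hχ
      | zero => exact inn_zero_right _
      | add y z _ _ hy hz => rw [inn_add_right, hy, hz, add_zero]
      | smul c y _ hy => rw [inn_smul_right, hy, mul_zero]
    | zero => intro β _; rw [qconcat_zero_left]; exact inn_zero_left _
    | add x y _ _ hx hy =>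
      intro β hβ
      rw [qconcat_add_left, inn_add_left, hx β hβ, hy β hβ, add_zero]
    | smul c x _ hx =>
      intro β hβ
      rw [qconcat_smul_left, inn_smul_left, hx β hβ, mul_zero]
  exact ⟨key φ hφmem ψ hψmem, key ψ hψmem φ hφmem⟩

end
end

section
/- Kraft's inequality for base lengths: if ξ is a finite set of pairwise orthogonal quantum strings whose base lengths satisfy the condensability/ prefix-free property (equivalently, each |ψ⟩ ∈ ξ is supported on strings of length ≤ L(|ψ⟩) and the supports define a prefix-free structure), then Σ_{|ψ⟩∈ξ} 2^{−L(|ψ⟩)} ≤ Σ_{|ψ⟩∈ξ} 2^{−l̄(|ψ⟩)} ≤ 1, where L is the base (maximum) length and l̄ the average length. -/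
open scoped Classical BigOperators

noncomputable section

/-!
The first inequality holds termwise, since an average length never exceeds the maximal one.
For the second, Jensen's inequality for the convex function `t ↦ 2 ^ (-t)` bounds
`2 ^ (-avgLen ψ)` by `∑ₓ ‖ψ x‖² 2 ^ (-|x|)`, so it suffices to prove this weighted Kraft
inequality. Fix a string `z` of length `L` at least every base length. Shifting every `ξ i` by
every suffix of `z` gives an orthonormal family, the different shifts being orthogonal by
prefix-freeness, so Bessel's inequality against `|z⟩` gives `∑ᵢ ∑_{m ≤ L} ‖ξ i (z.take m)‖² ≤ 1`.
Summing over the `2 ^ L` strings `z`, each `x` occurs as a prefix `2 ^ (L - |x|)` times.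
-/

open Finset

section Words

variable {α : Type*} [Fintype α]

variable (α) in
def wordsOfLength (n : ℕ) : Finset (List α) :=
  (univ : Finset (List.Vector α n)).map ⟨List.Vector.toList, List.Vector.toList_injective⟩

@[simp]
lemma mem_wordsOfLength {n : ℕ} {x : List α} : x ∈ wordsOfLength α n ↔ x.length = n :=
  ⟨fun hx => by obtain ⟨v, -, rfl⟩ := mem_map.1 hx; exact v.toList_length,
    fun h => mem_map.2 ⟨⟨x, h⟩, mem_univ _, rfl⟩⟩

lemma card_wordsOfLength (n : ℕ) : #(wordsOfLength α n) = Fintype.card α ^ n := by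
  simp [wordsOfLength, card_vector]

lemma sum_wordsOfLength_take {M : Type*} [AddCommMonoid M] (g : List α → M) {L m : ℕ}
    (hm : m ≤ L) :
    ∑ z ∈ wordsOfLength α L, g (z.take m)
      = Fintype.card α ^ (L - m) • ∑ x ∈ wordsOfLength α m, g x := by
  have split : ∑ z ∈ wordsOfLength α L, g (z.take m)
      = ∑ p ∈ wordsOfLength α m ×ˢ wordsOfLength α (L - m), g p.1 := by
    refine sum_nbij' (fun z => (z.take m, z.drop m)) (fun p => p.1 ++ p.2) ?_ ?_ ?_ ?_ ?_
    · intro z hz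
      simp only [mem_product, mem_wordsOfLength, List.length_take, List.length_drop]
      simp only [mem_wordsOfLength] at hz
      omega
    · intro p hp
      simp only [mem_product, mem_wordsOfLength] at hp
      simp only [mem_wordsOfLength, List.length_append]
      omega
    · exact fun z _ => List.take_append_drop m z
    · intro p hp
      have hp1 := (mem_wordsOfLength.1 (mem_product.1 hp).1)
      exact Prod.ext (List.take_left' hp1) (List.drop_left' hp1)
    · exact fun _ _ => rfl
  rw [split, sum_product, ← card_wordsOfLength, smul_sum]
  exact sum_congr rfl fun x _ => sum_const (g x)

lemma sum_eq_sum_range_sum_wordsOfLength {M : Type*} [AddCommMonoid M] {s : Finset (List α)}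
    {f : List α → M} {L : ℕ} (hs : ∀ x ∈ s, x.length ≤ L) (hf : ∀ x ∉ s, f x = 0) :
    ∑ x ∈ s, f x = ∑ m ∈ range (L + 1), ∑ x ∈ wordsOfLength α m, f x := by
  have hdisj : (range (L + 1) : Set ℕ).PairwiseDisjoint (wordsOfLength α) :=
    fun a _ b _ hab => disjoint_left.2 fun x hxa hxb =>
      hab ((mem_wordsOfLength.1 hxa).symm.trans (mem_wordsOfLength.1 hxb))
  rw [← sum_biUnion hdisj]
  refine sum_subset (fun x hx => mem_biUnion.2 ?_) fun x _ hx => hf x hx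
  exact ⟨x.length, mem_range.2 (Nat.lt_succ_of_le (hs x hx)), mem_wordsOfLength.2 rfl⟩

/-- Kraft's counting argument: a word of length `m ≤ L` is the prefix of exactly
`card α ^ (L - m)` words of length `L`. -/
lemma sum_range_sum_wordsOfLength_div_le_one [Nonempty α] {f : List α → ℝ} {L : ℕ}
    (h : ∀ z ∈ wordsOfLength α L, ∑ m ∈ range (L + 1), f (z.take m) ≤ 1) :
    ∑ m ∈ range (L + 1), ∑ x ∈ wordsOfLength α m, f x / Fintype.card α ^ m ≤ 1 := by
  have scaled : (Fintype.card α : ℝ) ^ L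
      * ∑ m ∈ range (L + 1), ∑ x ∈ wordsOfLength α m, f x / Fintype.card α ^ m
      = ∑ z ∈ wordsOfLength α L, ∑ m ∈ range (L + 1), f (z.take m) := by
    rw [sum_comm, mul_sum]
    refine sum_congr rfl fun m hm => ?_
    have hmL : m ≤ L := Nat.lt_succ_iff.1 (mem_range.1 hm)
    rw [sum_wordsOfLength_take f hmL, nsmul_eq_mul, ← sum_div, mul_div_assoc', Nat.cast_pow,
      ← pow_sub_mul_pow _ hmL, mul_assoc, mul_div_assoc, mul_div_cancel_left₀ _ (by positivity)]
  have bound : ∑ z ∈ wordsOfLength α L, ∑ m ∈ range (L + 1), f (z.take m)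
      ≤ (Fintype.card α : ℝ) ^ L := by
    simpa [card_wordsOfLength] using sum_le_card_nsmul _ _ 1 h
  rw [← scaled] at bound
  exact le_of_mul_le_mul_left (by simpa using bound) (by positivity)

end Words

section InnerProduct

lemma inn_eq_sum_of_subset {φ ψ : QStr} {S : Finset (List Bool)}
    (hφ : φ.support ⊆ S) (hψ : ψ.support ⊆ S) :
    inn φ ψ = ∑ x ∈ S, (starRingEnd ℂ) (φ x) * ψ x := by
  refine sum_subset (union_subset hφ hψ) fun x _ hx => ?_
  rw [Finsupp.notMem_support_iff.1 fun h => hx (mem_union_left _ h), map_zero, zero_mul]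

lemma inn_conj_symm (φ ψ : QStr) : (starRingEnd ℂ) (inn ψ φ) = inn φ ψ := by
  rw [inn, inn, union_comm, map_sum]
  exact sum_congr rfl fun x _ => by rw [map_mul, Complex.conj_conj, mul_comm]

lemma inn_self (ψ : QStr) : inn ψ ψ = ((∑ x ∈ ψ.support, ‖ψ x‖ ^ 2 : ℝ) : ℂ) := by
  rw [inn, union_self, Complex.ofReal_sum]
  exact sum_congr rfl fun x _ => by rw [RCLike.conj_mul, Complex.ofReal_pow]; rfl

def restrictToEuclidean (S : Finset (List Bool)) (ψ : QStr) : EuclideanSpace ℂ S :=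
  WithLp.toLp 2 fun x => ψ x

lemma inner_restrictToEuclidean {S : Finset (List Bool)} {φ ψ : QStr}
    (hφ : φ.support ⊆ S) (hψ : ψ.support ⊆ S) :
    inner ℂ (restrictToEuclidean S φ) (restrictToEuclidean S ψ) = inn φ ψ := by
  rw [inn_eq_sum_of_subset hφ hψ, ← sum_coe_sort S]
  simp only [PiLp.inner_apply, RCLike.inner_apply']
  rfl

lemma sum_norm_sq_apply_le_one {ι : Type*} [Fintype ι] [DecidableEq ι] {v : ι → QStr}
    (hv : ∀ p q, inn (v p) (v q) = if p = q then 1 else 0) (z : List Bool) :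
    ∑ p, ‖v p z‖ ^ 2 ≤ 1 := by
  set S := univ.biUnion (fun p => (v p).support) ∪ {z}
  have hS : ∀ p, (v p).support ⊆ S := fun p =>
    (subset_biUnion_of_mem (fun p => (v p).support) (mem_univ p)).trans subset_union_left
  have hON : Orthonormal ℂ fun p => restrictToEuclidean S (v p) :=
    orthonormal_iff_ite.2 fun p q => by rw [inner_restrictToEuclidean (hS p) (hS q), hv]
  have bessel := hON.sum_inner_products_le (s := univ)
    (EuclideanSpace.single ⟨z, mem_union_right _ (mem_singleton_self z)⟩ (1 : ℂ))
  simpa [EuclideanSpace.inner_single_right, restrictToEuclidean] using bessel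

end InnerProduct

section Append

def appendRight (ψ : QStr) (y : List Bool) : QStr :=
  Finsupp.mapDomain (· ++ y) ψ

lemma appendRight_apply_append (ψ : QStr) (x y : List Bool) :
    appendRight ψ y (x ++ y) = ψ x :=
  Finsupp.mapDomain_apply (List.append_left_injective y) ψ x

lemma appendRight_appendRight (ψ : QStr) (w y : List Bool) :
    appendRight (appendRight ψ w) y = appendRight ψ (w ++ y) := by
  rw [appendRight, appendRight, appendRight, ← Finsupp.mapDomain_comp]
  congr 1
  funext x
  exact List.append_assoc x w y

lemma support_appendRight_subset (ψ : QStr) (y : List Bool) :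
    (appendRight ψ y).support ⊆ ψ.support.image (· ++ y) :=
  Finsupp.mapDomain_support

lemma qconcat_single_one (ψ : QStr) (y : List Bool) :
    qconcat ψ (Finsupp.single y 1) = appendRight ψ y := by
  refine Finsupp.sum_congr fun x _ => ?_
  rw [Finsupp.sum_single_index (by simp), mul_one]

lemma inn_appendRight_appendRight (φ ψ : QStr) (y : List Bool) :
    inn (appendRight φ y) (appendRight ψ y) = inn φ ψ := by
  rw [inn_eq_sum_of_subset (S := (φ.support ∪ ψ.support).image (· ++ y))
      ((support_appendRight_subset φ y).trans (image_subset_image subset_union_left))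
      ((support_appendRight_subset ψ y).trans (image_subset_image subset_union_right)),
    sum_image fun _ _ _ _ h => List.append_left_injective y h]
  exact sum_congr rfl fun x _ => by rw [appendRight_apply_append, appendRight_apply_append]

lemma inn_appendRight_append_eq_zero {φ ψ : QStr}
    (hpf : ∀ χ : QStr, χ [] = 0 → inn (qconcat φ χ) ψ = 0) {w : List Bool} (hw : w ≠ [])
    (y : List Bool) : inn (appendRight φ (w ++ y)) (appendRight ψ y) = 0 := by
  rw [← appendRight_appendRight, inn_appendRight_appendRight, ← qconcat_single_one]
  exact hpf _ (Finsupp.single_eq_of_ne' hw)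

lemma inn_appendRight_drop_eq_zero {φ ψ : QStr}
    (hpf : ∀ χ : QStr, χ [] = 0 → inn (qconcat φ χ) ψ = 0) {z : List Bool} {m m' : ℕ}
    (hm : m < m') (hm' : m' ≤ z.length) :
    inn (appendRight φ (z.drop m)) (appendRight ψ (z.drop m')) = 0 := by
  have hsplit : z.drop m = (z.drop m).take (m' - m) ++ z.drop m' := by
    have h := List.take_append_drop (m' - m) (z.drop m)
    rw [List.drop_drop, Nat.add_sub_cancel' hm.le] at h
    exact h.symm
  have hne : (z.drop m).take (m' - m) ≠ [] := by
    rw [← List.length_pos_iff, List.length_take, List.length_drop]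
    omega
  rw [hsplit]
  exact inn_appendRight_append_eq_zero hpf hne _

end Append

section PrefixFreeFamily

variable {ι : Type*} {ξ : ι → QStr}

/-- Along a fixed string `z`, the family `ξ i` shifted by every suffix of `z` stays orthonormal:
equal shifts reduce to the orthonormality of `ξ`, different shifts to prefix-freeness. -/
lemma inn_appendRight_drop_eq_ite (hnorm : ∀ i, ∑ x ∈ (ξ i).support, ‖ξ i x‖ ^ 2 = 1)
    (horth : ∀ i j, i ≠ j → inn (ξ i) (ξ j) = 0)
    (hpf : ∀ i j, ∀ χ : QStr, χ [] = 0 → inn (qconcat (ξ i) χ) (ξ j) = 0)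
    (z : List Bool) (p q : ι × Fin (z.length + 1)) :
    inn (appendRight (ξ p.1) (z.drop p.2)) (appendRight (ξ q.1) (z.drop q.2))
      = if p = q then 1 else 0 := by
  obtain ⟨i, m⟩ := p
  obtain ⟨j, m'⟩ := q
  rcases lt_trichotomy m m' with hlt | rfl | hgt
  · rw [if_neg (by simp [hlt.ne])]
    exact inn_appendRight_drop_eq_zero (hpf i j) hlt (Nat.lt_succ_iff.1 m'.isLt)
  · rw [inn_appendRight_appendRight]
    by_cases hij : i = j
    · rw [hij, if_pos rfl, inn_self, hnorm, Complex.ofReal_one]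
    · rw [if_neg (by simp [hij]), horth i j hij]
  · rw [if_neg (by simp [hgt.ne']), ← inn_conj_symm,
      inn_appendRight_drop_eq_zero (hpf j i) hgt (Nat.lt_succ_iff.1 m.isLt), map_zero]

lemma sum_sum_norm_sq_take_le_one [Fintype ι]
    (hnorm : ∀ i, ∑ x ∈ (ξ i).support, ‖ξ i x‖ ^ 2 = 1)
    (horth : ∀ i j, i ≠ j → inn (ξ i) (ξ j) = 0)
    (hpf : ∀ i j, ∀ χ : QStr, χ [] = 0 → inn (qconcat (ξ i) χ) (ξ j) = 0) (z : List Bool) :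
    ∑ i, ∑ m ∈ range (z.length + 1), ‖ξ i (z.take m)‖ ^ 2 ≤ 1 := by
  have bessel := sum_norm_sq_apply_le_one (inn_appendRight_drop_eq_ite hnorm horth hpf z) z
  simp only [Fintype.sum_prod_type] at bessel
  convert bessel using 2 with i
  rw [← Fin.sum_univ_eq_sum_range]
  refine sum_congr rfl fun m _ => ?_
  have h := appendRight_apply_append (ξ i) (z.take m) (z.drop m)
  rw [List.take_append_drop] at h
  rw [h]

lemma sum_sum_norm_sq_mul_two_rpow_neg_length_le_one [Fintype ι]
    (hnorm : ∀ i, ∑ x ∈ (ξ i).support, ‖ξ i x‖ ^ 2 = 1)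
    (horth : ∀ i j, i ≠ j → inn (ξ i) (ξ j) = 0)
    (hpf : ∀ i j, ∀ χ : QStr, χ [] = 0 → inn (qconcat (ξ i) χ) (ξ j) = 0) :
    ∑ i, ∑ x ∈ (ξ i).support, ‖ξ i x‖ ^ 2 * (2 : ℝ) ^ (-(x.length : ℝ)) ≤ 1 := by
  set L := univ.sup fun i => baseLen (ξ i)
  have hL : ∀ i, ∀ x ∈ (ξ i).support, x.length ≤ L := fun i x hx =>
    (le_sup (f := List.length) hx).trans (le_sup (f := fun i => baseLen (ξ i)) (mem_univ i))
  have kraft := sum_range_sum_wordsOfLength_div_le_one (f := fun x => ∑ i, ‖ξ i x‖ ^ 2) (L := L)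
    fun z hz => by
      rw [sum_comm, ← mem_wordsOfLength.1 hz]
      exact sum_sum_norm_sq_take_le_one hnorm horth hpf z
  refine le_of_eq_of_le ?_ kraft
  calc ∑ i, ∑ x ∈ (ξ i).support, ‖ξ i x‖ ^ 2 * (2 : ℝ) ^ (-(x.length : ℝ))
      = ∑ i, ∑ m ∈ range (L + 1), ∑ x ∈ wordsOfLength Bool m,
          ‖ξ i x‖ ^ 2 * (2 : ℝ) ^ (-(x.length : ℝ)) :=
        sum_congr rfl fun i _ => sum_eq_sum_range_sum_wordsOfLength (hL i) fun x hx => by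
          rw [Finsupp.notMem_support_iff.1 hx, norm_zero, zero_pow two_ne_zero, zero_mul]
    _ = ∑ m ∈ range (L + 1), ∑ x ∈ wordsOfLength Bool m,
          ∑ i, ‖ξ i x‖ ^ 2 * (2 : ℝ) ^ (-(x.length : ℝ)) := by
        rw [sum_comm]
        exact sum_congr rfl fun m _ => sum_comm
    _ = _ := by
        refine sum_congr rfl fun m _ => sum_congr rfl fun x hx => ?_
        rw [← sum_mul, mem_wordsOfLength.1 hx, Real.rpow_neg zero_le_two, Real.rpow_natCast,
          Fintype.card_bool, Nat.cast_ofNat, div_eq_mul_inv]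

end PrefixFreeFamily

section Lengths

lemma avgLen_le_baseLen {ψ : QStr} (hψ : ∑ x ∈ ψ.support, ‖ψ x‖ ^ 2 = 1) :
    avgLen ψ ≤ baseLen ψ :=
  calc avgLen ψ ≤ ∑ x ∈ ψ.support, ‖ψ x‖ ^ 2 * (baseLen ψ : ℝ) :=
        sum_le_sum fun x hx => mul_le_mul_of_nonneg_left
          (by exact_mod_cast le_sup (f := List.length) hx) (by positivity)
    _ = baseLen ψ := by rw [← sum_mul, hψ, one_mul]

lemma two_rpow_neg_avgLen_le {ψ : QStr} (hψ : ∑ x ∈ ψ.support, ‖ψ x‖ ^ 2 = 1) :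
    (2 : ℝ) ^ (-avgLen ψ) ≤ ∑ x ∈ ψ.support, ‖ψ x‖ ^ 2 * (2 : ℝ) ^ (-(x.length : ℝ)) := by
  have jensen := (convexOn_rpow_left (b := 2⁻¹) (by norm_num)).map_sum_le
    (t := ψ.support) (w := fun x => ‖ψ x‖ ^ 2) (p := fun x => (x.length : ℝ))
    (fun x _ => by positivity) hψ fun x _ => Set.mem_univ _
  simpa only [avgLen, smul_eq_mul, Real.inv_rpow zero_le_two, ← Real.rpow_neg zero_le_two]
    using jensen

end Lengths

/-- Kraft's inequality for base and average lengths of an orthonormal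
prefix free (condensable) family. -/
theorem stmt_6 (n : ℕ) (ξ : Fin n → QStr)
    (hnorm : ∀ i, ∑ x ∈ (ξ i).support, ‖ξ i x‖ ^ 2 = 1)
    (horth : ∀ i j, i ≠ j → inn (ξ i) (ξ j) = 0)
    (hpf : ∀ i j, ∀ χ : QStr, χ [] = 0 → inn (qconcat (ξ i) χ) (ξ j) = 0) :
    (∑ i, (2 : ℝ) ^ (-(baseLen (ξ i) : ℝ))) ≤ (∑ i, (2 : ℝ) ^ (-avgLen (ξ i)))
      ∧ (∑ i, (2 : ℝ) ^ (-avgLen (ξ i))) ≤ 1 :=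
  ⟨sum_le_sum fun i _ =>
      Real.rpow_le_rpow_of_exponent_le one_le_two (neg_le_neg (avgLen_le_baseLen (hnorm i))),
    (sum_le_sum fun i _ => two_rpow_neg_avgLen_le (hnorm i)).trans
      (sum_sum_norm_sq_mul_two_rpow_neg_length_le_one hnorm horth hpf)⟩

end
end
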